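/- arXiv:2212.06723 — 3 statements merged into one kernel-verified Lean document; each statement's English description precedes it below -/
import Mathlib

section
/- Let X and Y be Köthe sequence spaces with the Fatou property. If the multiplier space M(X,Y) is not order continuous, then there exists λ ∈ M(X,Y) such that the multiplication operator M_λ : X → Y is not compact. -/
/-- A representation of a Banach space `E` as a Köthe sequence space: an injective
linear coordinate map into sequences, with the ideal property of the norm. -/
structure KotheRepr (E : Type*) [NormedAddCommGroup E] [NormedSpace ℝ E] where
  coord : E →ₗ[ℝ] (ℕ → ℝ)
  inj : Function.Injective coord
  ideal : ∀ (f : ℕ → ℝ) (z : E), (∀ n, |f n| ≤ |coord z n|) →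
    ∃ w : E, coord w = f ∧ ‖w‖ ≤ ‖z‖

/-- The Fatou property: if a norm-bounded sequence of elements converges
coordinatewise to a sequence `f`, then `f` represents an element whose norm obeys
the same bound. -/
def KotheRepr.Fatou {E : Type*} [NormedAddCommGroup E] [NormedSpace ℝ E]
    (X : KotheRepr E) : Prop :=
  ∀ (g : ℕ → E) (f : ℕ → ℝ) (c : ℝ), (∀ k, ‖g k‖ ≤ c) →
    (∀ n, Filter.Tendsto (fun k => X.coord (g k) n) Filter.atTop (nhds (f n))) →
    ∃ w : E, X.coord w = f ∧ ‖w‖ ≤ c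

/-- Truncation of a sequence to the tail `{n, n+1, ...}`. -/
def tailTrunc (lam : ℕ → ℝ) (n : ℕ) : ℕ → ℝ := fun m => if n ≤ m then lam m else 0

/-- `T` is the multiplication operator with symbol `lam`. -/
def HasSymbol {E F : Type*} [NormedAddCommGroup E] [NormedSpace ℝ E]
    [NormedAddCommGroup F] [NormedSpace ℝ F]
    (X : KotheRepr E) (Y : KotheRepr F) (T : E →L[ℝ] F) (lam : ℕ → ℝ) : Prop :=
  ∀ (z : E) (n : ℕ), Y.coord (T z) n = lam n * X.coord z n

/-- The norm of `lam` in the multiplier space `M(X,Y)`: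
`sup { ‖λ·z‖_Y : ‖z‖_X ≤ 1 }`. -/
noncomputable def multNorm {E F : Type*} [NormedAddCommGroup E] [NormedSpace ℝ E]
    [NormedAddCommGroup F] [NormedSpace ℝ F]
    (X : KotheRepr E) (Y : KotheRepr F) (lam : ℕ → ℝ) : ℝ :=
  sSup {c : ℝ | ∃ (z : E) (w : F), ‖z‖ ≤ 1 ∧
    (∀ n, Y.coord w n = lam n * X.coord z n) ∧ c = ‖w‖}

/-- **Non-compact multipliers from non-order-continuity (half of Pitt-type
Proposition).**  Let `X`, `Y` be Köthe sequence spaces with the Fatou property.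
If the multiplier space `M(X,Y)` is not order continuous (some bounded
multiplication operator has a symbol whose tail multiplier norms do not tend to
zero), then there is a symbol `λ ∈ M(X,Y)` whose multiplication operator
`M_λ : X → Y` is not compact. -/
theorem exists_noncompact_multiplier_of_not_orderContinuous
    {E F : Type*} [NormedAddCommGroup E] [NormedSpace ℝ E] [CompleteSpace E]
    [NormedAddCommGroup F] [NormedSpace ℝ F] [CompleteSpace F]
    (X : KotheRepr E) (Y : KotheRepr F) (hX : X.Fatou) (hY : Y.Fatou)
    (hnotOC : ∃ (lam₀ : ℕ → ℝ) (T₀ : E →L[ℝ] F), HasSymbol X Y T₀ lam₀ ∧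
      ¬ Filter.Tendsto (fun n => multNorm X Y (tailTrunc lam₀ n))
          Filter.atTop (nhds 0)) :
    ∃ (lam : ℕ → ℝ) (T : E →L[ℝ] F), HasSymbol X Y T lam ∧
      ¬ IsCompactOperator T := by
  obtain ⟨lam₀, T₀, hsym, hnt⟩ := hnotOC
  refine ⟨lam₀, T₀, hsym, ?_⟩
  -- extract δ with frequently large tail norms
  have hδ : ∃ δ > 0, ∀ N, ∃ n ≥ N, δ ≤ |multNorm X Y (tailTrunc lam₀ n)| := by
    by_contra hc
    push_neg at hc
    apply hnt
    rw [Metric.tendsto_atTop]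
    intro ε hε
    obtain ⟨N, hN⟩ := hc ε hε
    exact ⟨N, fun n hn => by simpa [Real.dist_eq] using hN n hn⟩
  obtain ⟨δ, hδpos, hfreq⟩ := hδ
  -- key block lemma
  have key : ∀ N : ℕ, ∃ (z : E) (m : ℕ), N ≤ m ∧ ‖z‖ ≤ 1 ∧
      (∀ j, (j < N ∨ m ≤ j) → X.coord z j = 0) ∧ δ / 2 < ‖T₀ z‖ := by
    intro N
    obtain ⟨n, hnN, hn⟩ := hfreq N
    set S : Set ℝ := {c : ℝ | ∃ (z : E) (w : F), ‖z‖ ≤ 1 ∧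
      (∀ n', Y.coord w n' = tailTrunc lam₀ n n' * X.coord z n') ∧ c = ‖w‖} with hSdef
    have h0S : (0:ℝ) ∈ S := ⟨0, 0, by simp, fun n' => by simp, by simp⟩
    have hSne : S.Nonempty := ⟨0, h0S⟩
    have hn' : δ ≤ |sSup S| := hn
    have hsup : δ ≤ sSup S := by
      by_cases hbdd : BddAbove S
      · have h0le : (0:ℝ) ≤ sSup S := le_csSup hbdd h0S
        rwa [abs_of_nonneg h0le] at hn'
      · rw [Real.sSup_of_not_bddAbove hbdd] at hn'
        simp only [abs_zero] at hn'
        linarith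
    obtain ⟨c, hcS, hc⟩ := exists_lt_of_lt_csSup hSne
      (lt_of_lt_of_le (by linarith : δ / 2 < δ) hsup)
    obtain ⟨z₀, w, hz₀, hw, rfl⟩ := hcS
    -- truncations of w
    have htr : ∀ m : ℕ, ∃ wm : F,
        Y.coord wm = (fun j => if j < m then Y.coord w j else 0) ∧ ‖wm‖ ≤ ‖w‖ := by
      intro m
      exact Y.ideal _ w (fun j => by by_cases h : j < m <;> simp [h])
    choose wm hwm1 hwm2 using htr
    have hm : ∃ m, δ / 2 < ‖wm m‖ := by
      by_contra hcon
      push_neg at hcon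
      obtain ⟨w', hw'1, hw'2⟩ := hY wm (Y.coord w) (δ / 2) hcon (by
        intro j
        apply tendsto_atTop_of_eventually_const (i₀ := j + 1)
        intro k hk
        rw [hwm1 k]
        simp [Nat.lt_of_lt_of_le (Nat.lt_succ_self j) hk])
      have : w' = w := Y.inj hw'1
      rw [this] at hw'2
      linarith
    obtain ⟨m, hm⟩ := hm
    -- truncation of z₀
    obtain ⟨z, hz1, hz2⟩ := X.ideal (fun j => if n ≤ j ∧ j < m then X.coord z₀ j else 0) z₀
      (fun j => by by_cases h : n ≤ j ∧ j < m <;> simp [h])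
    refine ⟨z, max m N, le_max_right _ _, le_trans hz2 hz₀, ?_, ?_⟩
    · intro j hj
      rw [hz1]
      rcases hj with hj | hj
      · have : ¬ (n ≤ j) := by omega
        simp [this]
      · have : ¬ (j < m) := by omega
        simp [this]
    · have hTz : T₀ z = wm m := by
        apply Y.inj
        funext j
        rw [hsym z j, hz1, hwm1]
        by_cases hjm : j < m
        · by_cases hnj : n ≤ j <;> simp [hjm, hnj, hw j, tailTrunc]
        · have hnot : ¬ (n ≤ j ∧ j < m) := fun h => hjm h.2
          simp [hjm, hnot]
      rw [hTz]
      exact hm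
  choose Z M hM h1 h2 h3 using key
  -- block starting points
  let b : ℕ → ℕ := fun k => Nat.rec 0 (fun _ prev => M prev) k
  have hb : ∀ k, b (k + 1) = M (b k) := fun k => rfl
  have hmono : Monotone b := monotone_nat_of_le_succ (fun k => by rw [hb]; exact hM (b k))
  set u : ℕ → F := fun k => T₀ (Z (b k)) with hu
  -- separation
  have hsep0 : ∀ k l, k < l → δ / 2 < ‖u k - u l‖ := by
    intro k l hkl
    have hptw : ∀ j, |Y.coord (u k) j| ≤ |Y.coord (u k - u l) j| := by
      intro j
      rw [map_sub, Pi.sub_apply]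
      rcases lt_or_ge j (b l) with hjl | hjl
      · have hzl : X.coord (Z (b l)) j = 0 := h2 (b l) j (Or.inl hjl)
        have hul : Y.coord (u l) j = 0 := by rw [hu]; rw [hsym, hzl, mul_zero]
        simp [hul]
      · have hjM : M (b k) ≤ j := by
          have hble : b (k + 1) ≤ b l := hmono hkl
          rw [hb] at hble
          omega
        have hzk : X.coord (Z (b k)) j = 0 := h2 (b k) j (Or.inr hjM)
        have huk : Y.coord (u k) j = 0 := by rw [hu]; rw [hsym, hzk, mul_zero]
        simp [huk]
    obtain ⟨w', hw'1, hw'2⟩ := Y.ideal (Y.coord (u k)) (u k - u l) hptw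
    have : w' = u k := Y.inj hw'1
    rw [this] at hw'2
    exact lt_of_lt_of_le (h3 (b k)) hw'2
  have hsep : ∀ k l, k ≠ l → δ / 2 < dist (u k) (u l) := by
    intro k l hne
    rcases lt_or_gt_of_ne hne with h | h
    · rw [dist_eq_norm]; exact hsep0 k l h
    · rw [dist_comm, dist_eq_norm]; exact hsep0 l k h
  -- noncompactness
  intro hcpt
  have hcpt' : IsCompactOperator ⇑(T₀ : E →ₗ[ℝ] F) := hcpt
  obtain ⟨K, hK, hKsub⟩ := hcpt'.image_closedBall_subset_compact 1
  have huK : ∀ k, u k ∈ K := by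
    intro k
    apply hKsub
    exact ⟨Z (b k), mem_closedBall_zero_iff.mpr (h1 (b k)), rfl⟩
  obtain ⟨a, -, φ, hφ, htend⟩ := hK.tendsto_subseq huK
  have hcau := htend.cauchySeq
  rw [Metric.cauchySeq_iff] at hcau
  obtain ⟨N, hN⟩ := hcau (δ / 2) (by linarith)
  have h1' := hN N le_rfl (N + 1) (Nat.le_succ N)
  have h2' := hsep (φ N) (φ (N + 1)) (fun h => by
    have := hφ.injective h
    omega)
  simp only [Function.comp] at h1'
  linarith
end

section
/- Let X and Y be Köthe sequence spaces with the Fatou property. If the multiplier space M(X,Y) is order continuous, then every multiplication operator M_λ : X → Y with λ ∈ M(X,Y) is compact; moreover M_λ is the operator-norm limit of the finite-rank multipliers M_{λ χ_{{1,...,n}}}. -/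
/-- A continuous linear map with finite-dimensional range is a compact operator. -/
lemma aux_isCompactOperator_of_fdRange {E F : Type*}
    [NormedAddCommGroup E] [NormedSpace ℝ E] [NormedAddCommGroup F] [NormedSpace ℝ F]
    (f : E →L[ℝ] F) (h : FiniteDimensional ℝ (LinearMap.range (f : E →ₗ[ℝ] F))) :
    IsCompactOperator f := by
  refine ⟨Subtype.val '' Metric.closedBall (0 : LinearMap.range (f : E →ₗ[ℝ] F)) (‖f‖ + 1),
    ?_, ?_⟩
  · exact (isCompact_closedBall _ _).image continuous_subtype_val
  · refine Filter.mem_of_superset (Metric.ball_mem_nhds 0 one_pos) ?_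
    intro z hz
    refine ⟨⟨f z, LinearMap.mem_range_self _ z⟩, ?_, rfl⟩
    simp only [Metric.mem_closedBall, dist_zero_right]
    have h1 : ‖(⟨f z, LinearMap.mem_range_self (f : E →ₗ[ℝ] F) z⟩ :
        LinearMap.range (f : E →ₗ[ℝ] F))‖ = ‖f z‖ := rfl
    rw [h1]
    have hz1 : ‖z‖ < 1 := by simpa [dist_zero_right] using hz
    calc ‖f z‖ ≤ ‖f‖ * ‖z‖ := f.le_opNorm z
      _ ≤ ‖f‖ * 1 := by
          exact mul_le_mul_of_nonneg_left hz1.le (norm_nonneg f)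
      _ ≤ ‖f‖ + 1 := by nlinarith [norm_nonneg f]

/-- **Compactness of multipliers from order continuity of `M(X,Y)` (half of the
Pitt-type Proposition).**  Let `X`, `Y` be Köthe sequence spaces with the Fatou
property.  If the multiplier space `M(X,Y)` is order continuous (the tail
multiplier norms of every symbol of a bounded multiplication operator tend to
zero), then every multiplication operator `M_λ : X → Y` is compact; moreover it
is the operator-norm limit of the finite-rank truncated multipliers
`M_{λ·χ_{{0,...,n-1}}}`. -/
theorem compact_multiplier_of_orderContinuous
    {E F : Type*} [NormedAddCommGroup E] [NormedSpace ℝ E] [CompleteSpace E]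
    [NormedAddCommGroup F] [NormedSpace ℝ F] [CompleteSpace F]
    (X : KotheRepr E) (Y : KotheRepr F) (hX : X.Fatou) (hY : Y.Fatou)
    (hOC : ∀ (lam : ℕ → ℝ) (T : E →L[ℝ] F), HasSymbol X Y T lam →
      Filter.Tendsto (fun n => multNorm X Y (tailTrunc lam n))
        Filter.atTop (nhds 0)) :
    ∀ (lam : ℕ → ℝ) (T : E →L[ℝ] F), HasSymbol X Y T lam →
      IsCompactOperator T ∧
      ∃ Tfin : ℕ → (E →L[ℝ] F),
        (∀ n, HasSymbol X Y (Tfin n) (fun m => if m < n then lam m else 0)) ∧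
        Filter.Tendsto (fun n => ‖T - Tfin n‖) Filter.atTop (nhds 0) := by
  intro lam T hT
  -- Step 1: construct the truncated multipliers
  have key : ∀ n : ℕ, ∃ S : E →L[ℝ] F,
      HasSymbol X Y S (fun m => if m < n then lam m else 0) := by
    intro n
    have hb : ∀ z : E, ∀ m, |(fun m => if m < n then lam m * X.coord z m else 0) m|
        ≤ |Y.coord (T z) m| := by
      intro z m
      simp only [hT z m]
      by_cases hm : m < n
      · simp [hm]
      · simp [hm, abs_nonneg]; positivity
    choose w hw hwle using fun z => Y.ideal _ (T z) (hb z)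
    have hwadd : ∀ z₁ z₂ : E, w (z₁ + z₂) = w z₁ + w z₂ := by
      intro z₁ z₂
      apply Y.inj
      rw [map_add, hw, hw, hw]
      funext m
      simp only [map_add, Pi.add_apply]
      split <;> ring
    have hwsmul : ∀ (c : ℝ) (z : E), w (c • z) = c • w z := by
      intro c z
      apply Y.inj
      rw [map_smul, hw, hw]
      funext m
      simp only [map_smul, Pi.smul_apply, smul_eq_mul]
      split <;> ring
    let L : E →ₗ[ℝ] F :=
      { toFun := w, map_add' := hwadd, map_smul' := hwsmul }
    have hLb : ∀ z, ‖L z‖ ≤ ‖T‖ * ‖z‖ := fun z => (hwle z).trans (T.le_opNorm z)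
    refine ⟨LinearMap.mkContinuous L ‖T‖ hLb, ?_⟩
    intro z m
    have hm := congrFun (hw z) m
    rw [show (LinearMap.mkContinuous L ‖T‖ hLb) z = w z from rfl, hm]
    by_cases h : m < n <;> simp [h]
  choose Tfin hsym using key
  -- Step 2: symbol of the difference
  have hdiff : ∀ (n : ℕ) (z : E) (m : ℕ),
      Y.coord ((T - Tfin n) z) m = tailTrunc lam n m * X.coord z m := by
    intro n z m
    have : (T - Tfin n) z = T z - Tfin n z := rfl
    rw [this, map_sub, Pi.sub_apply, hT z m, hsym n z m, tailTrunc]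
    by_cases hm : m < n
    · simp [hm, Nat.not_le.mpr hm]
    · simp [hm, Nat.le_of_not_lt hm]
  -- Step 3: the multiplier-norm estimate
  have hset : ∀ n : ℕ, ∀ c ∈ {c : ℝ | ∃ (z : E) (w : F), ‖z‖ ≤ 1 ∧
      (∀ m, Y.coord w m = tailTrunc lam n m * X.coord z m) ∧ c = ‖w‖},
      c ≤ ‖T - Tfin n‖ := by
    rintro n c ⟨z, w, hz, hwc, rfl⟩
    have hw' : w = (T - Tfin n) z := by
      apply Y.inj
      funext m
      rw [hwc m, hdiff n z m]
    rw [hw']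
    calc ‖(T - Tfin n) z‖ ≤ ‖T - Tfin n‖ * ‖z‖ := (T - Tfin n).le_opNorm z
      _ ≤ ‖T - Tfin n‖ * 1 := mul_le_mul_of_nonneg_left hz (norm_nonneg _)
      _ = ‖T - Tfin n‖ := mul_one _
  have hmem0 : ∀ n : ℕ, (0 : ℝ) ∈ {c : ℝ | ∃ (z : E) (w : F), ‖z‖ ≤ 1 ∧
      (∀ m, Y.coord w m = tailTrunc lam n m * X.coord z m) ∧ c = ‖w‖} := by
    intro n
    exact ⟨0, 0, by simp, by simp, by simp⟩
  have hbdd : ∀ n : ℕ, BddAbove {c : ℝ | ∃ (z : E) (w : F), ‖z‖ ≤ 1 ∧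
      (∀ m, Y.coord w m = tailTrunc lam n m * X.coord z m) ∧ c = ‖w‖} :=
    fun n => ⟨‖T - Tfin n‖, fun c hc => hset n c hc⟩
  have hmnn : ∀ n : ℕ, 0 ≤ multNorm X Y (tailTrunc lam n) :=
    fun n => le_csSup (hbdd n) (hmem0 n)
  have hop : ∀ n : ℕ, ‖T - Tfin n‖ ≤ multNorm X Y (tailTrunc lam n) := by
    intro n
    refine ContinuousLinearMap.opNorm_le_bound _ (hmnn n) ?_
    intro z
    by_cases hz : z = 0
    · simp [hz]
    · set z' : E := ‖z‖⁻¹ • z with hz'def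
      have hz1 : ‖z'‖ = 1 := norm_smul_inv_norm hz
      have hmem : ‖(T - Tfin n) z'‖ ∈ {c : ℝ | ∃ (z : E) (w : F), ‖z‖ ≤ 1 ∧
          (∀ m, Y.coord w m = tailTrunc lam n m * X.coord z m) ∧ c = ‖w‖} :=
        ⟨z', (T - Tfin n) z', le_of_eq hz1, fun m => hdiff n z' m, rfl⟩
      have hle : ‖(T - Tfin n) z'‖ ≤ multNorm X Y (tailTrunc lam n) :=
        le_csSup (hbdd n) hmem
      have hzz : z = ‖z‖ • z' := by
        rw [hz'def, smul_smul, mul_inv_cancel₀ (norm_ne_zero_iff.mpr hz), one_smul]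
      calc ‖(T - Tfin n) z‖ = ‖(T - Tfin n) (‖z‖ • z')‖ := by rw [← hzz]
        _ = ‖z‖ * ‖(T - Tfin n) z'‖ := by rw [map_smul, norm_smul, Real.norm_eq_abs,
              abs_of_nonneg (norm_nonneg z)]
        _ ≤ ‖z‖ * multNorm X Y (tailTrunc lam n) := by
              exact mul_le_mul_of_nonneg_left hle (norm_nonneg z)
        _ = multNorm X Y (tailTrunc lam n) * ‖z‖ := mul_comm _ _
  -- Step 4: norm convergence
  have htend : Filter.Tendsto (fun n => ‖T - Tfin n‖) Filter.atTop (nhds 0) :=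
    squeeze_zero (fun n => norm_nonneg _) hop (hOC lam T hT)
  -- Step 5: each Tfin n has finite-dimensional range, hence is compact
  have hfd : ∀ n : ℕ, FiniteDimensional ℝ (LinearMap.range ((Tfin n : E →L[ℝ] F) :
      E →ₗ[ℝ] F)) := by
    intro n
    let ψ : F →ₗ[ℝ] (Fin n → ℝ) := (LinearMap.funLeft ℝ ℝ (Fin.val)).comp Y.coord
    have hinj : Function.Injective
        (ψ.comp (LinearMap.range ((Tfin n : E →L[ℝ] F) : E →ₗ[ℝ] F)).subtype) := by
      rw [← LinearMap.ker_eq_bot, LinearMap.ker_eq_bot']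
      rintro ⟨v, z, rfl⟩ hv
      have hcoord : Y.coord (((Tfin n : E →L[ℝ] F) : E →ₗ[ℝ] F) z) = 0 := by
        funext m
        by_cases hm : m < n
        · have := congrFun hv ⟨m, hm⟩
          simpa [ψ, LinearMap.funLeft_apply] using this
        · have := hsym n z m
          simp only [ContinuousLinearMap.coe_coe]
          rw [this]
          simp [hm]
      have h0 : ((Tfin n : E →L[ℝ] F) : E →ₗ[ℝ] F) z = 0 :=
        Y.inj (by rw [hcoord, map_zero])
      exact Subtype.ext h0
    exact FiniteDimensional.of_injective _ hinj
  have hcomp : ∀ n : ℕ, IsCompactOperator (Tfin n) :=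
    fun n => aux_isCompactOperator_of_fdRange (Tfin n) (hfd n)
  -- Step 6: T is the operator-norm limit of the Tfin n
  have htendT : Filter.Tendsto Tfin Filter.atTop (nhds T) := by
    rw [tendsto_iff_norm_sub_tendsto_zero]
    simpa [norm_sub_rev] using htend
  refine ⟨isCompactOperator_of_tendsto htendT (Filter.Eventually.of_forall hcomp),
    Tfin, hsym, htend⟩
end

section
/- Let X be a reflexive Köthe sequence space with the Fatou property and Y a Köthe sequence space. For λ ∈ M(X,Y), the essential norm of M_λ : X → Y satisfies ‖M_λ‖_ess ≥ lim_{n→∞} ‖λ χ_{{n,n+1,...}}‖_{M(X,Y)}. -/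
open Filter Metric NormedSpace Set Topology


section aux
variable {E : Type*} [NormedAddCommGroup E] [NormedSpace ℝ E]

lemma KotheRepr.coord_bound (X : KotheRepr E) (j : ℕ) :
    ∃ C : ℝ, ∀ z : E, |X.coord z j| ≤ C * ‖z‖ := by
  by_cases h : ∀ z : E, X.coord z j = 0
  · exact ⟨0, fun z => by simp [h z]⟩
  push_neg at h
  obtain ⟨z₀, hz₀⟩ := h
  obtain ⟨w, hw, -⟩ := X.ideal (fun m => if m = j then X.coord z₀ j else 0) z₀
    (by intro m; by_cases hm : m = j <;> simp [hm])
  set e : E := (X.coord z₀ j)⁻¹ • w with he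
  have hce : X.coord e = fun m => if m = j then 1 else 0 := by
    rw [he, map_smul, hw]
    funext m
    by_cases hm : m = j <;> simp [hm, inv_mul_cancel₀ hz₀]
  have hene : e ≠ 0 := by
    intro h0
    have := congrFun hce j
    rw [h0, map_zero] at this
    simp at this
  have hepos : 0 < ‖e‖ := norm_pos_iff.mpr hene
  refine ⟨‖e‖⁻¹, fun z => ?_⟩
  obtain ⟨w', hw', hwn⟩ := X.ideal (fun m => if m = j then X.coord z j else 0) z
    (by intro m; by_cases hm : m = j <;> simp [hm])
  have hw'e : w' = (X.coord z j) • e := by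
    apply X.inj
    rw [hw', map_smul, hce]
    funext m
    by_cases hm : m = j <;> simp [hm]
  rw [hw'e, norm_smul, Real.norm_eq_abs] at hwn
  rw [inv_mul_eq_div, le_div_iff₀ hepos]
  exact hwn

lemma KotheRepr.exists_coordCLM (X : KotheRepr E) (j : ℕ) :
    ∃ φ : E →L[ℝ] ℝ, ∀ z, φ z = X.coord z j := by
  obtain ⟨C, hC⟩ := X.coord_bound j
  refine ⟨LinearMap.mkContinuous ((LinearMap.proj j).comp X.coord) C (fun z => ?_), fun z => rfl⟩
  simpa [Real.norm_eq_abs] using hC z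

lemma weak_ball_compact (hrefl : Function.Surjective (NormedSpace.inclusionInDoubleDual ℝ E)) :
    IsCompact (toWeakSpace ℝ E '' Metric.closedBall 0 1) := by
  set j := NormedSpace.inclusionInDoubleDual ℝ E with hj
  have hiso : ∀ z : E, ‖j z‖ = ‖z‖ := fun z =>
    (NormedSpace.inclusionInDoubleDualLi ℝ (E := E)).norm_map z
  have hinj : Function.Injective j := by
    intro a b hab
    have h := hiso (a - b)
    simp only [map_sub, hab, sub_self, norm_zero] at h
    exact sub_eq_zero.mp (norm_eq_zero.mp (h.symm.trans ContinuousLinearMap.opNorm_zero))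
  set g : WeakDual ℝ (StrongDual ℝ E) → WeakSpace ℝ E :=
    fun x => toWeakSpace ℝ E (Function.surjInv hrefl x) with hg
  have hg_j : ∀ x : StrongDual ℝ (StrongDual ℝ E), j (Function.surjInv hrefl x) = x :=
    fun x => Function.surjInv_eq hrefl x
  have hgcont : Continuous g := by
    apply WeakBilin.continuous_of_continuous_eval
    intro φ
    have heq : (fun x : WeakDual ℝ (StrongDual ℝ E) => (topDualPairing ℝ E).flip (g x) φ)
        = fun x : WeakDual ℝ (StrongDual ℝ E) => topDualPairing ℝ (StrongDual ℝ E) x φ := by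
      funext x
      show φ (Function.surjInv hrefl x) = x φ
      conv_rhs => rw [← hg_j x]
      rfl
    rw [heq]
    exact WeakBilin.eval_continuous _ φ
  have hcomp := WeakDual.isCompact_closedBall (𝕜 := ℝ) (E := StrongDual ℝ E) 0 1
  have himg : toWeakSpace ℝ E '' Metric.closedBall 0 1
      = g '' (WeakDual.toStrongDual ⁻¹' Metric.closedBall 0 1) := by
    apply Set.eq_of_subset_of_subset
    · rintro - ⟨z, hz, rfl⟩
      refine ⟨StrongDual.toWeakDual (j z), ?_, ?_⟩
      · show j z ∈ Metric.closedBall 0 1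
        rw [mem_closedBall_zero_iff (E := StrongDual ℝ (StrongDual ℝ E)), hiso]
        exact mem_closedBall_zero_iff.mp hz
      · show toWeakSpace ℝ E (Function.surjInv hrefl (j z)) = toWeakSpace ℝ E z
        rw [hinj (hg_j (j z))]
    · rintro - ⟨x, hx, rfl⟩
      refine ⟨Function.surjInv hrefl x, ?_, rfl⟩
      rw [mem_closedBall_zero_iff, ← hiso, hg_j (x : StrongDual ℝ (StrongDual ℝ E))]
      exact (mem_closedBall_zero_iff (E := StrongDual ℝ (StrongDual ℝ E))).mp hx
  rw [himg]
  exact hcomp.image hgcont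

end aux

/-- **Lower estimate for the essential norm of a multiplication operator when the
domain is reflexive.**  Let `X` be a reflexive Köthe sequence space with the Fatou
property and `Y` a Köthe sequence space.  For `λ ∈ M(X,Y)` with multiplication
operator `M_λ = T : X → Y`, the essential norm of `T` is at least
`lim_{n→∞} ‖λ·χ_{{n,n+1,...}}‖_{M(X,Y)}`. -/
theorem essNorm_multiplier_ge_lim_of_reflexive
    {E F : Type*} [NormedAddCommGroup E] [NormedSpace ℝ E] [CompleteSpace E]
    [NormedAddCommGroup F] [NormedSpace ℝ F] [CompleteSpace F]
    (X : KotheRepr E) (Y : KotheRepr F)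
    (hXrefl : Function.Surjective (NormedSpace.inclusionInDoubleDual ℝ E))
    (hXfatou : X.Fatou)
    (lam : ℕ → ℝ) (T : E →L[ℝ] F) (hT : HasSymbol X Y T lam)
    (L : ℝ)
    (hlim : Filter.Tendsto (fun n => multNorm X Y (tailTrunc lam n))
      Filter.atTop (nhds L)) :
    L ≤ sInf {c : ℝ | ∃ K : E →L[ℝ] F, IsCompactOperator K ∧ c = ‖T - K‖} := by
  classical
  choose φ hφ using fun j => X.exists_coordCLM j
  set Sset : ℕ → Set ℝ := fun n => {c : ℝ | ∃ (z : E) (w : F), ‖z‖ ≤ 1 ∧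
    (∀ m, Y.coord w m = tailTrunc lam n m * X.coord z m) ∧ c = ‖w‖} with hSset
  have hne : ∀ n, (Sset n).Nonempty := by
    intro n
    exact ⟨0, 0, 0, by simp, fun m => by simp, by simp⟩
  have hext : ∀ n c, c ∈ Sset n → ∃ z' : E, ‖z'‖ ≤ 1 ∧
      (∀ m, m < n → X.coord z' m = 0) ∧ c = ‖T z'‖ := by
    rintro n c ⟨z, w, hz, hw, rfl⟩
    obtain ⟨z', hz'c, hz'n⟩ := X.ideal (fun m => if n ≤ m then X.coord z m else 0) z
      (by intro m; by_cases hm : n ≤ m <;> simp [hm])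
    have hTz' : T z' = w := by
      apply Y.inj
      funext m
      rw [hT z' m, hz'c, hw m]
      by_cases hm : n ≤ m <;> simp [tailTrunc, hm]
    refine ⟨z', hz'n.trans hz, fun m hm => ?_, by rw [hTz']⟩
    rw [hz'c]
    simp [Nat.not_le.mpr hm]
  refine le_csInf ⟨‖T - 0‖, ⟨0, isCompactOperator_zero, rfl⟩⟩ ?_
  rintro c ⟨K, hK, rfl⟩
  refine le_of_forall_pos_le_add (fun ε hε => ?_)
  set δ : ℝ := ε / 3 with hδdef
  have hδ : 0 < δ := by positivity
  have hev : ∀ᶠ n in atTop, L - δ < multNorm X Y (tailTrunc lam n) :=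
    hlim.eventually (lt_mem_nhds (by linarith))
  obtain ⟨N₀, hN₀⟩ := eventually_atTop.mp hev
  have hchoice : ∀ n : ℕ, ∃ z' : E, ‖z'‖ ≤ 1 ∧ (∀ m, m < n → X.coord z' m = 0) ∧
      (N₀ ≤ n → L - δ < ‖T z'‖) := by
    intro n
    by_cases hn : N₀ ≤ n
    · obtain ⟨c, hc, hlt⟩ := exists_lt_of_lt_csSup (hne n) (hN₀ n hn)
      obtain ⟨z', h1, h2, rfl⟩ := hext n c hc
      exact ⟨z', h1, h2, fun _ => hlt⟩
    · exact ⟨0, by simp, fun m _ => by simp, fun h => absurd h hn⟩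
  choose u hu1 hu2 hu3 using hchoice
  -- weak cluster point of u is 0
  have hball : ∀ n, toWeakSpace ℝ E (u n) ∈ toWeakSpace ℝ E '' Metric.closedBall 0 1 :=
    fun n => ⟨u n, mem_closedBall_zero_iff.mpr (hu1 n), rfl⟩
  obtain ⟨zw, -, hzw⟩ := (weak_ball_compact hXrefl)
    (f := Filter.map (fun n => toWeakSpace ℝ E (u n)) atTop)
    (le_principal_iff.mpr (Filter.mem_map.mpr (Filter.Eventually.of_forall hball)))
  have hz0 : ∀ j, X.coord ((toWeakSpace ℝ E).symm zw) j = 0 := by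
    intro j
    have hcont : Continuous fun v : WeakSpace ℝ E => (topDualPairing ℝ E).flip v (φ j) :=
      WeakBilin.eval_continuous _ _
    have hcp := MapClusterPt.continuousAt_comp (F := atTop)
      (u := fun n => toWeakSpace ℝ E (u n)) hcont.continuousAt hzw
    have hmle : Filter.map ((fun v : WeakSpace ℝ E => (topDualPairing ℝ E).flip v (φ j)) ∘
        (fun n => toWeakSpace ℝ E (u n))) atTop ≤ Filter.principal {(0:ℝ)} := by
      rw [le_principal_iff, Filter.mem_map]
      filter_upwards [eventually_gt_atTop j] with n hn
      show φ j (u n) ∈ ({0} : Set ℝ)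
      rw [Set.mem_singleton_iff, hφ j (u n)]
      exact hu2 n j hn
    have hc0 := hcp.clusterPt.mono hmle
    have hmem := mem_closure_iff_clusterPt.mpr hc0
    rw [closure_singleton] at hmem
    have : φ j ((toWeakSpace ℝ E).symm zw) = 0 := hmem
    rwa [hφ j] at this
  have hzzero : zw = toWeakSpace ℝ E 0 := by
    rw [← (toWeakSpace ℝ E).apply_symm_apply zw]
    congr 1
    apply X.inj
    funext j
    rw [map_zero]
    exact hz0 j
  -- 0 is a weak cluster point of K (u n)
  have hKcl : ClusterPt (toWeakSpace ℝ F 0)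
      (Filter.map (fun n => toWeakSpace ℝ F (K (u n))) atTop) := by
    have hcont := (WeakSpace.map (𝕜 := ℝ) K).continuous
    have hcp := MapClusterPt.continuousAt_comp (F := atTop)
      (u := fun n => toWeakSpace ℝ E (u n)) hcont.continuousAt hzw
    have h1 : WeakSpace.map (𝕜 := ℝ) K zw = toWeakSpace ℝ F 0 := by
      rw [hzzero]
      show toWeakSpace ℝ F (K 0) = toWeakSpace ℝ F 0
      rw [map_zero]
    have h2 : (⇑(WeakSpace.map (𝕜 := ℝ) K) ∘ fun n => toWeakSpace ℝ E (u n))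
        = fun n => toWeakSpace ℝ F (K (u n)) := rfl
    rw [h1, h2] at hcp
    exact hcp.clusterPt
  -- frequently ‖K (u n)‖ is small
  have hfreq : ∃ᶠ n in atTop, ‖K (u n)‖ < δ := by
    by_contra hcon
    rw [Filter.not_frequently] at hcon
    obtain ⟨N₁, hN₁⟩ := eventually_atTop.mp hcon
    have hN₁' : ∀ n, N₁ ≤ n → δ ≤ ‖K (u n)‖ := fun n hn => not_lt.mp (hN₁ n hn)
    have hKlin : IsCompactOperator ⇑(K.toLinearMap) := hK
    have hA : IsCompact (closure (⇑(K.toLinearMap) '' Metric.closedBall 0 1)) :=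
      hKlin.isCompact_closure_image_closedBall (𝕜₁ := ℝ) 1
    set B : Set F := closure (⇑(K.toLinearMap) '' Metric.closedBall 0 1) ∩ {y : F | δ ≤ ‖y‖}
      with hBdef
    have hBcomp : IsCompact B := hA.inter_right (isClosed_le continuous_const continuous_norm)
    have hmemB : ∀ n, N₁ ≤ n → K (u n) ∈ B := fun n hn =>
      ⟨subset_closure ⟨u n, mem_closedBall_zero_iff.mpr (hu1 n), rfl⟩, hN₁' n hn⟩
    obtain ⟨t, htB, htfin, htcov⟩ := hBcomp.elim_finite_subcover_image
      (c := fun a => Metric.ball a (δ/4)) (fun a _ => isOpen_ball)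
      (fun y hy => Set.mem_biUnion hy (mem_ball_self (by positivity)))
    have hdual : ∀ a : F, ∃ g : StrongDual ℝ F, ‖g‖ ≤ 1 ∧ (a ∈ B → g a = ‖a‖) := by
      intro a
      by_cases ha : a ∈ B
      · have hane : a ≠ 0 := by
          intro h0
          have h5 : δ ≤ ‖a‖ := ha.2
          rw [h0, norm_zero] at h5
          exact absurd h5 (not_le.mpr hδ)
        obtain ⟨g, hg1, hg2⟩ := exists_dual_vector ℝ a (norm_ne_zero_iff.mpr hane)
        exact ⟨g, le_of_eq hg1, fun _ => by simpa using hg2⟩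
      · exact ⟨0, by simp, fun h => absurd h ha⟩
    choose ψ hψ1 hψ2 using hdual
    set U : Set (WeakSpace ℝ F) := ⋂ a ∈ t, (fun v : WeakSpace ℝ F =>
      (topDualPairing ℝ F).flip v (ψ a)) ⁻¹' (Iio (3*δ/4)) with hUdef
    have hUopen : IsOpen U := by
      apply htfin.isOpen_biInter
      intro a _
      exact (isOpen_Iio).preimage (WeakBilin.eval_continuous _ _)
    have hU0 : toWeakSpace ℝ F 0 ∈ U := by
      refine Set.mem_iInter₂.mpr (fun a _ => ?_)
      show ψ a (0 : F) ∈ Iio (3*δ/4)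
      rw [map_zero]
      exact Set.mem_Iio.mpr (by positivity)
    have hUnhds : U ∈ 𝓝 (toWeakSpace ℝ F 0) := hUopen.mem_nhds hU0
    have hfreqU : ∃ᶠ n in atTop, toWeakSpace ℝ F (K (u n)) ∈ U :=
      mapClusterPt_iff_frequently.mp hKcl U hUnhds
    obtain ⟨n, hnU, hnN₁⟩ := (hfreqU.and_eventually (eventually_ge_atTop N₁)).exists
    have hKB := hmemB n hnN₁
    obtain ⟨a, hat, hab⟩ := Set.mem_iUnion₂.mp (htcov hKB)
    have haB : a ∈ B := htB hat
    have h1 : ψ a (K (u n)) < 3*δ/4 := Set.mem_iInter₂.mp hnU a hat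
    have h2 : ψ a a = ‖a‖ := hψ2 a haB
    have h3 : ‖a - K (u n)‖ < δ/4 := by
      rw [norm_sub_rev, ← dist_eq_norm]
      exact Metric.mem_ball.mp hab
    have h4 : |ψ a (a - K (u n))| ≤ ‖a - K (u n)‖ := by
      calc |ψ a (a - K (u n))| = ‖ψ a (a - K (u n))‖ := (Real.norm_eq_abs _).symm
        _ ≤ ‖ψ a‖ * ‖a - K (u n)‖ := (ψ a).le_opNorm _
        _ ≤ 1 * ‖a - K (u n)‖ := mul_le_mul_of_nonneg_right (hψ1 a) (norm_nonneg _)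
        _ = ‖a - K (u n)‖ := one_mul _
    have h5 : δ ≤ ‖a‖ := haB.2
    have h6 : ψ a (K (u n)) = ψ a a - ψ a (a - K (u n)) := by
      rw [map_sub]
      ring
    have h7 := abs_le.mp h4
    linarith
  obtain ⟨n, hn1, hn2⟩ := (hfreq.and_eventually (eventually_ge_atTop N₀)).exists
  have h1 := hu3 n hn2
  have h2 : ‖(T - K) (u n)‖ ≤ ‖T - K‖ := (T - K).unit_le_opNorm _ (hu1 n)
  have h3 : ‖T (u n)‖ - ‖K (u n)‖ ≤ ‖(T - K) (u n)‖ := by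
    rw [ContinuousLinearMap.sub_apply]
    exact norm_sub_norm_le _ _
  have hδε : δ = ε / 3 := hδdef
  linarith
end
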